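/- Let V be a simple vertex ring (no 2-sided ideals other than 0 and V). Then the center C(V), with product u·v = u(-1)v, is a field. -/

import Mathlib

noncomputable section

/-- Binomial coefficient `C(m, n)` for integer `m` and natural `n`:
`C(m,n) = m(m-1)⋯(m-n+1)/n!`. -/
def ibin (m : ℤ) (n : ℕ) : ℤ :=
  if 0 ≤ m then ((m.toNat.choose n : ℕ) : ℤ)
  else (-1) ^ n * ((((n : ℤ) - m - 1).toNat.choose n : ℕ) : ℤ)

/-- Binomial coefficient `C(m, n)` for integers `m, n`, zero when `n < 0`. -/
def ibinZ (m n : ℤ) : ℤ := if 0 ≤ n then ibin m n.toNat else 0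

/-- A vertex ring structure on an additive abelian group `V`: biadditive
products `mul n u v = u(n)v` for all `n : ℤ`, a vacuum element `one = 𝟙`,
satisfying truncation, the vacuum axioms, and the Jacobi identity. -/
structure VertexRing (V : Type*) [AddCommGroup V] where
  mul : ℤ → V → V → V
  one : V
  add_left : ∀ (n : ℤ) (u u' v : V), mul n (u + u') v = mul n u v + mul n u' v
  add_right : ∀ (n : ℤ) (u v v' : V), mul n u (v + v') = mul n u v + mul n u v'
  trunc : ∀ u v : V, ∃ n₀ : ℤ, 0 ≤ n₀ ∧ ∀ n : ℤ, n₀ ≤ n → mul n u v = 0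
  vac_create : ∀ u : V, mul (-1) u one = u
  vac_ann : ∀ (u : V) (n : ℤ), 0 ≤ n → mul n u one = 0
  jacobi : ∀ (r s t : ℤ) (u v w : V),
      (∑ᶠ i : ℕ, ibin r i • mul (r + s - (i : ℤ)) (mul (t + (i : ℤ)) u v) w) =
      (∑ᶠ i : ℕ, ((-1) ^ i * ibin t i) •
        (mul (r + t - (i : ℤ)) u (mul (s + (i : ℤ)) v w)
          - (((-1 : ℤˣ) ^ t : ℤˣ) : ℤ) • mul (s + t - (i : ℤ)) v (mul (r + (i : ℤ)) u w)))

/-- The canonical Hasse–Schmidt derivation of a vertex ring: `D m u = u(-m-1)𝟙`. -/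
def VertexRing.D {V : Type*} [AddCommGroup V] (R : VertexRing V) (m : ℕ) (u : V) : V :=
  R.mul (-(m : ℤ) - 1) u R.one

/-- The center of a vertex ring: states whose vertex operator is the constant
`u(-1)`, i.e. `u(n) = 0` for all `n ≠ -1`. -/
def VertexRing.center {V : Type*} [AddCommGroup V] (R : VertexRing V) : Set V :=
  {u | ∀ n : ℤ, n ≠ -1 → ∀ v : V, R.mul n u v = 0}

/-- `I` is a 2-sided ideal of the vertex ring `R`. -/
def VertexRing.IsTwoSidedIdeal {V : Type*} [AddCommGroup V] (R : VertexRing V)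
    (I : AddSubgroup V) : Prop :=
  ∀ (a u : V) (n : ℤ), u ∈ I → R.mul n a u ∈ I ∧ R.mul n u a ∈ I

/-! For central `u`, the Jacobi identity (with a single surviving summand) shows that `u(-1)`
commutes with every operator `a(n)` and that `(u(-1)a)(n) = u(-1) ∘ a(n)`; hence the image and
the kernel of `u(-1)` are 2-sided ideals. Simplicity makes `u(-1)` bijective when `u ≠ 0`, and
the preimage `v` of `𝟙` is central because `u(-1)(v(n)w) = 𝟙(n)w = 0` for `n ≠ -1`, the vacuum
itself being central. -/

lemma ibin_zero_right (m : ℤ) : ibin m 0 = 1 := by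
  unfold ibin; split <;> simp

lemma ibin_zero_left {i : ℕ} (hi : i ≠ 0) : ibin 0 i = 0 := by
  simp [ibin, Nat.choose_eq_zero_of_lt (Nat.pos_of_ne_zero hi)]

lemma ibin_neg_one_left (i : ℕ) : ibin (-1) i = (-1) ^ i := by
  simp [ibin]

namespace VertexRing

variable {V : Type*} [AddCommGroup V] (R : VertexRing V)

def mulLeft (n : ℤ) (u : V) : V →+ V :=
  AddMonoidHom.mk' (R.mul n u) (R.add_right n u)

@[simp]
lemma mulLeft_apply (n : ℤ) (u v : V) : R.mulLeft n u v = R.mul n u v := rfl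

lemma mul_zero_right (n : ℤ) (u : V) : R.mul n u 0 = 0 :=
  (R.mulLeft n u).map_zero

lemma mul_zero_left (n : ℤ) (v : V) : R.mul n 0 v = 0 :=
  (AddMonoidHom.mk' (R.mul n · v) (fun a b => R.add_left n a b v)).map_zero

lemma one_ne_zero [Nontrivial V] : R.one ≠ 0 := by
  intro h
  obtain ⟨x, y, hxy⟩ := exists_pair_ne V
  have h_eq_zero (z : V) : z = 0 := by rw [← R.vac_create z, h, mul_zero_right]
  exact hxy ((h_eq_zero x).trans (h_eq_zero y).symm)

lemma jacobi_single (r s t : ℤ) (u v w : V)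
    (hl : ∀ i : ℕ, i ≠ 0 → ibin r i = 0 ∨ R.mul (t + i) u v = 0)
    (hr : ∀ i : ℕ, i ≠ 0 →
      R.mul (r + t - i) u (R.mul (s + i) v w) = 0 ∧ R.mul (s + t - i) v (R.mul (r + i) u w) = 0) :
    R.mul (r + s) (R.mul t u v) w =
      R.mul (r + t) u (R.mul s v w) -
        (((-1 : ℤˣ) ^ t : ℤˣ) : ℤ) • R.mul (s + t) v (R.mul r u w) := by
  have J := R.jacobi r s t u v w
  rw [finsum_eq_single _ 0 fun i hi => ?_, finsum_eq_single _ 0 fun i hi => ?_] at J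
  · simpa [ibin_zero_right] using J
  · simp [(hr i hi).1, (hr i hi).2]
  · rcases hl i hi with h | h <;> simp [h, mul_zero_left]

lemma one_mul_of_nonneg {t : ℤ} (ht : 0 ≤ t) (u : V) : R.mul t R.one u = 0 := by
  have J := R.jacobi_single (-1) 0 t u R.one R.one
    (fun i _ => Or.inr (R.vac_ann u _ (by positivity)))
    (fun i hi => ⟨by rw [R.vac_ann R.one _ (by positivity), mul_zero_right],
      by rw [R.vac_ann u _ (by omega), mul_zero_right]⟩)
  rw [R.vac_ann u t ht, mul_zero_left, R.vac_ann R.one 0 le_rfl, mul_zero_right, zero_sub,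
    zero_add, R.vac_create, eq_comm, neg_eq_zero, ← Units.smul_def] at J
  exact (smul_eq_zero_iff_eq _).1 J

lemma one_mul_neg_one (u : V) : R.mul (-1) R.one u = u := by
  have J := R.jacobi_single (-1) 0 (-1) u R.one R.one
    (fun i hi => Or.inr (R.vac_ann u _ (by omega)))
    (fun i hi => ⟨by rw [R.vac_ann R.one _ (by positivity), mul_zero_right],
      by rw [R.vac_ann u _ (by omega), mul_zero_right]⟩)
  rw [add_zero, zero_add, R.vac_create, R.vac_ann R.one 0 le_rfl, mul_zero_right,
    R.vac_create] at J
  simpa using J.symm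

lemma one_mul_neg_of_two_le (k : ℕ) (hk : 2 ≤ k) (w : V) : R.mul (-k) R.one w = 0 := by
  induction k using Nat.strong_induction_on generalizing w with
  | _ k ih =>
  have h_above (n : ℤ) (hkn : -k < n) (hn : n ≠ -1) (w : V) : R.mul n R.one w = 0 := by
    rcases le_or_gt 0 n with h | h
    · exact R.one_mul_of_nonneg h w
    · obtain ⟨j, rfl⟩ : ∃ j : ℕ, n = -j := ⟨n.natAbs, by omega⟩
      exact ih j (by omega) (by omega) w
  -- On the right only `i = 0` and `i = k - 1` survive, and both give `𝟙(-k)w`, as does the left.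
  have J := R.jacobi 0 (-k) (-1) R.one R.one w
  rw [finsum_eq_single _ 0 fun i hi => by rw [ibin_zero_left hi, zero_smul],
    finsum_eq_finsetSum_of_support_subset _ (s := {0, k - 1}) ?_,
    Finset.sum_pair (by omega)] at J
  · simp only [Nat.cast_zero, add_zero, sub_zero, zero_add, pow_zero, ibin_zero_right,
      ibin_neg_one_left, one_mul, one_smul, R.one_mul_neg_one, R.one_mul_of_nonneg le_rfl,
      R.one_mul_of_nonneg (Nat.cast_nonneg _), mul_zero_right, smul_zero, sub_zero,
      ← mul_pow, neg_mul_neg, one_pow] at J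
    rw [show -(k : ℤ) + (k - 1 : ℕ) = -1 by omega, show -1 - ((k - 1 : ℕ) : ℤ) = -k by omega,
      R.one_mul_neg_one] at J
    simpa using J
  · rw [Function.support_subset_iff']
    intro i hi
    simp only [Finset.coe_insert, Finset.coe_singleton, Set.mem_insert_iff,
      Set.mem_singleton_iff, not_or] at hi
    rw [R.one_mul_of_nonneg (t := 0 + i) (by positivity) w, mul_zero_right, smul_zero,
      sub_zero]
    rcases le_or_gt k i with h | h
    · rw [R.one_mul_of_nonneg (t := -k + i) (by omega), mul_zero_right, smul_zero]
    · rw [h_above (-k + i) (by omega) (by omega), mul_zero_right, smul_zero]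

lemma one_mem_center : R.one ∈ R.center := by
  intro n hn w
  rcases le_or_gt 0 n with h | h
  · exact R.one_mul_of_nonneg h w
  · obtain ⟨k, rfl⟩ : ∃ k : ℕ, n = -k := ⟨n.natAbs, by omega⟩
    exact R.one_mul_neg_of_two_le k (by omega) w

variable {R}

lemma center_mul_assoc {u : V} (hu : u ∈ R.center) (n : ℤ) (a w : V) :
    R.mul n (R.mul (-1) u a) w = R.mul (-1) u (R.mul n a w) := by
  have J := R.jacobi_single 0 n (-1) u a w (fun i hi => Or.inl (ibin_zero_left hi))
    (fun i hi => ⟨hu _ (by omega) _, by rw [hu _ (by omega) w, mul_zero_right]⟩)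
  rwa [hu 0 (by omega) w, mul_zero_right, smul_zero, sub_zero, zero_add, zero_add] at J

lemma mul_center_comm {u : V} (hu : u ∈ R.center) (n : ℤ) (a w : V) :
    R.mul n a (R.mul (-1) u w) = R.mul (-1) u (R.mul n a w) := by
  have J := R.jacobi_single (-1) (n + 1) (-1) u a w
    (fun i hi => Or.inr (hu _ (by omega) a))
    (fun i hi => ⟨hu _ (by omega) _, by rw [hu _ (by omega) w, mul_zero_right]⟩)
  rw [hu (-1 + -1) (by omega), zero_sub, show -1 + (n + 1) = n by ring,
    show n + 1 + -1 = n by ring, center_mul_assoc hu] at J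
  simpa using J.symm

lemma isTwoSidedIdeal_range_mulLeft {u : V} (hu : u ∈ R.center) :
    R.IsTwoSidedIdeal (R.mulLeft (-1) u).range := by
  rintro a _ n ⟨b, rfl⟩
  exact ⟨⟨R.mul n a b, (mul_center_comm hu n a b).symm⟩,
    ⟨R.mul n b a, (center_mul_assoc hu n b a).symm⟩⟩

lemma isTwoSidedIdeal_ker_mulLeft {u : V} (hu : u ∈ R.center) :
    R.IsTwoSidedIdeal (R.mulLeft (-1) u).ker := by
  intro a x n hx
  rw [AddMonoidHom.mem_ker, mulLeft_apply] at hx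
  simp only [AddMonoidHom.mem_ker, mulLeft_apply]
  exact ⟨by rw [← mul_center_comm hu, hx, mul_zero_right],
    by rw [← center_mul_assoc hu, hx, mul_zero_left]⟩

lemma mem_center_of_mul_eq_one {u v : V} (hu : u ∈ R.center)
    (hker : (R.mulLeft (-1) u).ker = ⊥) (huv : R.mul (-1) u v = R.one) : v ∈ R.center := by
  intro n hn w
  have h : R.mul n v w ∈ (R.mulLeft (-1) u).ker := by
    rw [AddMonoidHom.mem_ker, mulLeft_apply, ← center_mul_assoc hu, huv, R.one_mem_center n hn]
  rwa [hker, AddSubgroup.mem_bot] at h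

end VertexRing

open VertexRing in
/-- If `V` is a simple vertex ring then its center is a field: `𝟙 ≠ 0` and
every nonzero central element has a central inverse for the `-1` product. -/
theorem center_field_of_simple {V : Type*} [AddCommGroup V] [Nontrivial V]
    (R : VertexRing V)
    (hsimple : ∀ I : AddSubgroup V, R.IsTwoSidedIdeal I → I = ⊥ ∨ I = ⊤) :
    R.one ≠ 0 ∧
    ∀ u : V, u ∈ R.center → u ≠ 0 →
      ∃ v : V, v ∈ R.center ∧ R.mul (-1) u v = R.one := by
  refine ⟨R.one_ne_zero, fun u hu hu0 => ?_⟩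
  have hu_mem_range : u ∈ (R.mulLeft (-1) u).range := ⟨R.one, R.vac_create u⟩
  have hrange : (R.mulLeft (-1) u).range = ⊤ :=
    (hsimple _ (isTwoSidedIdeal_range_mulLeft hu)).resolve_left fun h =>
      hu0 (by rwa [h, AddSubgroup.mem_bot] at hu_mem_range)
  have hker : (R.mulLeft (-1) u).ker = ⊥ :=
    (hsimple _ (isTwoSidedIdeal_ker_mulLeft hu)).resolve_right fun h => by
      have h_one : R.one ∈ (R.mulLeft (-1) u).ker := h ▸ AddSubgroup.mem_top _
      rw [AddMonoidHom.mem_ker, mulLeft_apply, R.vac_create] at h_one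
      exact hu0 h_one
  obtain ⟨v, hv⟩ : R.one ∈ (R.mulLeft (-1) u).range := hrange ▸ AddSubgroup.mem_top _
  exact ⟨v, mem_center_of_mul_eq_one hu hker hv, hv⟩
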